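/- arXiv:2202.00395 — 3 statements merged into one kernel-verified Lean document; each statement's English description precedes it below -/
import Mathlib

section
/- Let (c_i, ξ_i), i=1,...,n, be i.i.d. with c_i ∈ [0,1], E[ξ_i | c_i] = 0, u_i = c_i + ξ_i ∈ [0,1], and define the sign-corrected estimator β̂_Noise = (1/n) Σ_{i=1}^n (𝟙[c_i ≥ 0.5](1-u_i) + 𝟙[c_i < 0.5] u_i). Then E[β̂_Noise] = E[min{c, 1-c}] = β, i.e., β̂_Noise is an unbiased estimator of the Bayes error. -/
open MeasureTheory

/-!
Writing `u = c + ξ`, the sign-corrected loss splits as `min c (1 - c) + s(c) ξ` with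
`s(c) = 1` for `c < 1/2` and `s(c) = -1` otherwise. Since `s(c)` is `σ(c)`-measurable and bounded,
the pull-out property gives `E[s(c) ξ] = E[s(c) E[ξ | c]] = 0`, so each summand has mean
`E[min c (1 - c)]`, which depends only on the common law `ν` of `(c, ξ)`.
-/

noncomputable def signCorrectedLoss (c u : ℝ) : ℝ :=
  (if (1 / 2 : ℝ) ≤ c then (1 : ℝ) else 0) * (1 - u)
    + (if c < (1 / 2 : ℝ) then (1 : ℝ) else 0) * u

noncomputable def correctionSign (c : ℝ) : ℝ := if c < 1 / 2 then 1 else -1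

lemma signCorrectedLoss_add (c x : ℝ) :
    signCorrectedLoss c (c + x) = min c (1 - c) + correctionSign c * x := by
  rcases lt_or_ge c (1 / 2) with h | h
  · simp only [signCorrectedLoss, correctionSign, if_neg (not_le.mpr h), if_pos h,
      min_eq_left (by linarith : c ≤ 1 - c)]
    ring
  · simp only [signCorrectedLoss, correctionSign, if_pos h, if_neg (not_lt.mpr h),
      min_eq_right (by linarith : 1 - c ≤ c)]
    ring

lemma norm_correctionSign (c : ℝ) : ‖correctionSign c‖ = 1 := by
  unfold correctionSign; split_ifs <;> simp

lemma measurable_correctionSign : Measurable correctionSign :=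
  Measurable.ite measurableSet_Iio measurable_const measurable_const

lemma integral_mul_eq_zero_of_condExp_ae_eq_zero {Ω : Type*} {m m₀ : MeasurableSpace Ω}
    {μ : Measure Ω} (hm : m ≤ m₀) [SigmaFinite (μ.trim hm)] {f g : Ω → ℝ} {C : ℝ}
    (hg : StronglyMeasurable[m] g) (hgC : ∀ x, ‖g x‖ ≤ C) (hf : Integrable f μ)
    (hf₀ : μ[f | m] =ᵐ[μ] 0) :
    ∫ x, g x * f x ∂μ = 0 := by
  have hgf : Integrable (g * f) μ :=
    hf.bdd_mul (hg.mono hm).aestronglyMeasurable (ae_of_all _ hgC)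
  calc ∫ x, (g * f) x ∂μ = ∫ x, μ[g * f | m] x ∂μ := (integral_condExp hm).symm
    _ = ∫ x, (g * μ[f | m]) x ∂μ :=
      integral_congr_ae (condExp_mul_of_stronglyMeasurable_left hg hgf hf)
    _ = ∫ x, (g * 0 : Ω → ℝ) x ∂μ := integral_congr_ae (Filter.EventuallyEq.rfl.mul hf₀)
    _ = 0 := by simp

section SignCorrectedLoss

variable {Ω : Type*} [MeasurableSpace Ω] {P : Measure Ω} {c ξ : Ω → ℝ}

lemma integrable_correctionSign_mul (hcm : Measurable c) (hξ : Integrable ξ P) :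
    Integrable (fun ω => correctionSign (c ω) * ξ ω) P :=
  hξ.bdd_mul (measurable_correctionSign.comp hcm).aestronglyMeasurable
    (ae_of_all _ fun ω => (norm_correctionSign (c ω)).le)

lemma integrable_min_one_sub [IsFiniteMeasure P] (hc : Integrable c P) :
    Integrable (fun ω => min (c ω) (1 - c ω)) P :=
  hc.inf ((integrable_const 1).sub hc)

lemma integrable_signCorrectedLoss [IsFiniteMeasure P] (hc : Integrable c P) (hcm : Measurable c)
    (hξ : Integrable ξ P) :
    Integrable (fun ω => signCorrectedLoss (c ω) (c ω + ξ ω)) P := by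
  simp_rw [signCorrectedLoss_add]
  exact (integrable_min_one_sub hc).add (integrable_correctionSign_mul hcm hξ)

lemma integral_signCorrectedLoss [IsFiniteMeasure P] (hc : Integrable c P) (hcm : Measurable c)
    (hξ : Integrable ξ P) (hnoise : P[ξ | MeasurableSpace.comap c inferInstance] =ᵐ[P] 0) :
    ∫ ω, signCorrectedLoss (c ω) (c ω + ξ ω) ∂P = ∫ ω, min (c ω) (1 - c ω) ∂P := by
  have hsign : StronglyMeasurable[MeasurableSpace.comap c inferInstance]
      (fun ω => correctionSign (c ω)) :=
    (measurable_correctionSign.comp (comap_measurable c)).stronglyMeasurable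
  simp_rw [signCorrectedLoss_add]
  rw [integral_add (integrable_min_one_sub hc) (integrable_correctionSign_mul hcm hξ),
    integral_mul_eq_zero_of_condExp_ae_eq_zero hcm.comap_le hsign
      (fun ω => (norm_correctionSign (c ω)).le) hξ hnoise, add_zero]

end SignCorrectedLoss

theorem noise_corrected_estimator_unbiased_general
    (n : ℕ) (hn : 0 < n)
    (Ω : Type*) [MeasurableSpace Ω] (P : Measure Ω) [IsProbabilityMeasure P]
    (c ξ : Fin n → Ω → ℝ) (ν : Measure (ℝ × ℝ))
    (hc : ∀ i, Measurable (c i)) (hξ : ∀ i, Measurable (ξ i))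
    (hc01 : ∀ i ω, c i ω ∈ Set.Icc (0 : ℝ) 1)
    (hu01 : ∀ i ω, c i ω + ξ i ω ∈ Set.Icc (0 : ℝ) 1)
    (hnoise : ∀ i, P[ξ i | MeasurableSpace.comap (c i) inferInstance] =ᵐ[P] 0)
    (hdist : ∀ i, Measure.map (fun ω => (c i ω, ξ i ω)) P = ν) :
    ∫ ω, (1 / n : ℝ) *
        ∑ i, ((if (1 / 2 : ℝ) ≤ c i ω then (1 : ℝ) else 0) * (1 - (c i ω + ξ i ω))
          + (if c i ω < (1 / 2 : ℝ) then (1 : ℝ) else 0) * (c i ω + ξ i ω)) ∂P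
      = ∫ p, min p.1 (1 - p.1) ∂ν := by
  have hcP (i : Fin n) : Integrable (c i) P :=
    .of_mem_Icc 0 1 (hc i).aemeasurable (ae_of_all _ (hc01 i))
  have hξP (i : Fin n) : Integrable (ξ i) P := by
    have huP : Integrable (fun ω => c i ω + ξ i ω) P :=
      .of_mem_Icc 0 1 ((hc i).add (hξ i)).aemeasurable (ae_of_all _ (hu01 i))
    exact (huP.sub (hcP i)).congr (ae_of_all _ fun ω => by simp)
  have hmean (i : Fin n) :
      ∫ ω, signCorrectedLoss (c i ω) (c i ω + ξ i ω) ∂P = ∫ p, min p.1 (1 - p.1) ∂ν := by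
    rw [integral_signCorrectedLoss (hcP i) (hc i) (hξP i) (hnoise i), ← hdist i,
      integral_map ((hc i).prodMk (hξ i)).aemeasurable (by fun_prop)]
  change ∫ ω, (1 / n : ℝ) * ∑ i, signCorrectedLoss (c i ω) (c i ω + ξ i ω) ∂P = _
  rw [integral_const_mul,
    integral_finsetSum _ fun i _ => integrable_signCorrectedLoss (hcP i) (hc i) (hξP i)]
  simp only [hmean, Finset.sum_const, Finset.card_univ, Fintype.card_fin, nsmul_eq_mul]
  field_simp

/-- With i.i.d. pairs `(cᵢ, ξᵢ)` (common distribution `ν`),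
`cᵢ ∈ [0,1]`, `E[ξᵢ|cᵢ] = 0`, and noisy soft labels `uᵢ = cᵢ + ξᵢ ∈ [0,1]`,
the sign-corrected estimator
`β̂_Noise = (1/n) ∑ᵢ (𝟙[cᵢ ≥ 1/2](1-uᵢ) + 𝟙[cᵢ < 1/2] uᵢ)` is an unbiased
estimator of the Bayes error `β = E_{c∼p(c)}[min{c, 1-c}]`. -/
theorem noise_corrected_estimator_unbiased
    (n : ℕ) (hn : 0 < n)
    (Ω : Type*) [MeasurableSpace Ω] (P : Measure Ω) [IsProbabilityMeasure P]
    (c ξ : Fin n → Ω → ℝ) (ν : Measure (ℝ × ℝ)) [IsProbabilityMeasure ν]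
    (hc : ∀ i, Measurable (c i)) (hξ : ∀ i, Measurable (ξ i))
    (hc01 : ∀ i ω, c i ω ∈ Set.Icc (0 : ℝ) 1)
    (hu01 : ∀ i ω, c i ω + ξ i ω ∈ Set.Icc (0 : ℝ) 1)
    (hnoise : ∀ i, P[ξ i | MeasurableSpace.comap (c i) inferInstance] =ᵐ[P] 0)
    (hdist : ∀ i, Measure.map (fun ω => (c i ω, ξ i ω)) P = ν) :
    ∫ ω, (1 / n : ℝ) *
        ∑ i, ((if (1 / 2 : ℝ) ≤ c i ω then (1 : ℝ) else 0) * (1 - (c i ω + ξ i ω))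
          + (if c i ω < (1 / 2 : ℝ) then (1 : ℝ) else 0) * (c i ω + ξ i ω)) ∂P
      = ∫ p, min p.1 (1 - p.1) ∂ν :=
  noise_corrected_estimator_unbiased_general n hn Ω P c ξ ν hc hξ hc01 hu01 hnoise hdist
end

section
/- Let p(x,y) be a distribution on ℝ^d × {+1,-1} with class prior π_+ = p(y=+1) and posterior r(x) = p(y=+1|x), and suppose r(x) > 0 for p-almost every x. Then the Bayes error satisfies β = π_+ (1 - E_{x∼p(x|y=+1)}[max{0, 2 - 1/r(x)}]). -/
/-! Since μ₊ has density η/π₊ with respect to μ, ∫ g dμ₊ = π₊⁻¹ ∫ η g dμ. For g = max{0, 2 - 1/η}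
the integrand is pointwise η g = η - min{η, 1 - η}, so π₊ ∫ g dμ₊ = π₊ - β. -/

open MeasureTheory

theorem mul_max_zero_two_sub_one_div {t : ℝ} (ht : 0 ≤ t) :
    t * max 0 (2 - 1 / t) = t - min t (1 - t) := by
  rcases ht.eq_or_lt with rfl | ht
  · simp
  rw [mul_max_of_nonneg _ _ ht.le, mul_zero, mul_sub, mul_one_div_cancel ht.ne']
  rcases le_total t (1 - t) with h | h
  · rw [min_eq_left h, max_eq_left (by linarith)]; ring
  · rw [min_eq_right h, max_eq_right (by linarith)]; ring

section

variable {α : Type*} [MeasurableSpace α] {μ : Measure α} {η : α → ℝ}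

theorem integral_withDensity_ofReal (hη : AEMeasurable η μ) (h0 : 0 ≤ᵐ[μ] η) (g : α → ℝ) :
    ∫ x, g x ∂μ.withDensity (fun x => ENNReal.ofReal (η x)) = ∫ x, η x * g x ∂μ := by
  rw [integral_withDensity_eq_integral_toReal_smul₀ hη.ennreal_ofReal
    (.of_forall fun _ => ENNReal.ofReal_lt_top)]
  refine integral_congr_ae ?_
  filter_upwards [h0] with x hx
  rw [ENNReal.toReal_ofReal hx, smul_eq_mul]

theorem integral_inv_smul_withDensity_ofReal {c : ℝ} (hc : 0 < c) (hη : AEMeasurable η μ)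
    (h0 : 0 ≤ᵐ[μ] η) (g : α → ℝ) :
    ∫ x, g x ∂((ENNReal.ofReal c)⁻¹ • μ.withDensity (fun x => ENNReal.ofReal (η x)))
      = c⁻¹ * ∫ x, η x * g x ∂μ := by
  rw [integral_smul_measure, integral_withDensity_ofReal hη h0, ENNReal.toReal_inv,
    ENNReal.toReal_ofReal hc.le, smul_eq_mul]

theorem integral_mul_max_zero_two_sub_one_div [IsFiniteMeasure μ] (hη : AEMeasurable η μ)
    (hη01 : ∀ᵐ x ∂μ, η x ∈ Set.Icc (0 : ℝ) 1) :
    ∫ x, η x * max 0 (2 - 1 / η x) ∂μ = ∫ x, η x ∂μ - ∫ x, min (η x) (1 - η x) ∂μ := by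
  have hmin : Integrable (fun x => min (η x) (1 - η x)) μ := by
    refine .of_mem_Icc 0 1 (hη.min (aemeasurable_const.sub hη)) ?_
    filter_upwards [hη01] with x ⟨h0, h1⟩
    exact ⟨le_min h0 (by linarith), (min_le_right _ _).trans (by linarith)⟩
  rw [← integral_sub (.of_mem_Icc 0 1 hη hη01) hmin]
  refine integral_congr_ae ?_
  filter_upwards [hη01] with x hx
  exact mul_max_zero_two_sub_one_div hx.1

end

theorem pconf_bayes_error_representation_general
    (d : ℕ) (μ : Measure (Fin d → ℝ)) [IsProbabilityMeasure μ]
    (η : (Fin d → ℝ) → ℝ) (hη : Measurable η)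
    (hη01 : ∀ x, η x ∈ Set.Icc (0 : ℝ) 1)
    (π : ℝ) (hπ : π = ∫ x, η x ∂μ) (hπpos : 0 < π)
    (μp : Measure (Fin d → ℝ))
    (hμp : μp = (ENNReal.ofReal π)⁻¹ •
      μ.withDensity (fun x => ENNReal.ofReal (η x))) :
    ∫ x, min (η x) (1 - η x) ∂μ
      = π * (1 - ∫ x, max 0 (2 - 1 / η x) ∂μp) := by
  have hη01' : ∀ᵐ x ∂μ, η x ∈ Set.Icc (0 : ℝ) 1 := .of_forall hη01
  rw [hμp, integral_inv_smul_withDensity_ofReal hπpos hη.aemeasurable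
      (hη01'.mono fun _ hx => hx.1),
    integral_mul_max_zero_two_sub_one_div hη.aemeasurable hη01', ← hπ, mul_sub,
    mul_inv_cancel_left₀ hπpos.ne']
  ring

/-- Positive-confidence representation of the Bayes error.  With
marginal `μ`, posterior `η x = r(x) = p(y=+1|x)` positive `μ`-a.e., class prior
`π₊ = E_μ[η]`, and positive class-conditional `μ₊` (which has density `η/π₊`
with respect to `μ`), the Bayes error satisfies
`β = π₊ (1 - E_{x∼μ₊}[max{0, 2 - 1/r(x)}])`. -/
theorem pconf_bayes_error_representation
    (d : ℕ) (μ : Measure (Fin d → ℝ)) [IsProbabilityMeasure μ]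
    (η : (Fin d → ℝ) → ℝ) (hη : Measurable η)
    (hη01 : ∀ x, η x ∈ Set.Icc (0 : ℝ) 1)
    (hpos : ∀ᵐ x ∂μ, 0 < η x)
    (π : ℝ) (hπ : π = ∫ x, η x ∂μ) (hπpos : 0 < π)
    (μp : Measure (Fin d → ℝ))
    (hμp : μp = (ENNReal.ofReal π)⁻¹ •
      μ.withDensity (fun x => ENNReal.ofReal (η x))) :
    ∫ x, min (η x) (1 - η x) ∂μ
      = π * (1 - ∫ x, max 0 (2 - 1 / η x) ∂μp) :=
  pconf_bayes_error_representation_general d μ η hη hη01 π hπ hπpos μp hμp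
end

section
/- Let r(x) = p(y=+1|x) with r(x) ≠ 0 for p(x)-almost every x, π_+ = p(y=+1), and let ℓ be a loss function. Then the classification risk R(g) = E_{p(x,y)}[ℓ(y g(x))] can be expressed as R(g) = π_+ E_{x∼p(x|y=+1)}[ℓ(g(x)) + ((1-r(x))/r(x)) ℓ(-g(x))]. -/
open MeasureTheory

/-! Since `p(x|y=+1) = r(x) p(x) / π₊`, integrating against `π₊ p(x|y=+1)` is integrating
`r(x) · _` against `p(x)`, and where `r(x) > 0` the `1/r(x)` cancels:
`r (ℓ(g) + (1 - r)/r · ℓ(-g)) = r ℓ(g) + (1 - r) ℓ(-g)`. -/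

section NormalizedDensity

variable {X E : Type*} [MeasurableSpace X] [NormedAddCommGroup E] [NormedSpace ℝ E]

theorem integral_withDensity_ofReal_s11 {μ : Measure X} {f : X → ℝ} (hf : AEMeasurable f μ)
    (hf0 : 0 ≤ᵐ[μ] f) (φ : X → E) :
    ∫ x, φ x ∂μ.withDensity (fun x => ENNReal.ofReal (f x)) = ∫ x, f x • φ x ∂μ := by
  rw [integral_withDensity_eq_integral_toReal_smul₀ hf.ennreal_ofReal
    (ae_of_all _ fun _ => ENNReal.ofReal_lt_top)]
  refine integral_congr_ae ?_
  filter_upwards [hf0] with x hx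
  rw [ENNReal.toReal_ofReal hx]

theorem integral_inv_ofReal_smul_measure {c : ℝ} (hc : 0 ≤ c) (ν : Measure X) (φ : X → E) :
    ∫ x, φ x ∂((ENNReal.ofReal c)⁻¹ • ν) = c⁻¹ • ∫ x, φ x ∂ν := by
  rw [integral_smul_measure, ENNReal.toReal_inv, ENNReal.toReal_ofReal hc]

end NormalizedDensity

theorem pconf_risk_rewrite_general
    (d : ℕ) (μ : Measure (Fin d → ℝ))
    (η : (Fin d → ℝ) → ℝ) (hη : Measurable η)
    (hpos : ∀ᵐ x ∂μ, 0 < η x)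
    (π : ℝ) (hπpos : 0 < π)
    (μp : Measure (Fin d → ℝ))
    (hμp : μp = (ENNReal.ofReal π)⁻¹ •
      μ.withDensity (fun x => ENNReal.ofReal (η x)))
    (ℓ : ℝ → ℝ)
    (g : (Fin d → ℝ) → ℝ) :
    ∫ x, (η x * ℓ (g x) + (1 - η x) * ℓ (-(g x))) ∂μ
      = π * ∫ x, (ℓ (g x) + ((1 - η x) / η x) * ℓ (-(g x))) ∂μp := by
  rw [hμp, integral_inv_ofReal_smul_measure hπpos.le,
    integral_withDensity_ofReal_s11 hη.aemeasurable (hpos.mono fun _ => le_of_lt),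
    smul_eq_mul, mul_inv_cancel_left₀ hπpos.ne']
  refine integral_congr_ae ?_
  filter_upwards [hpos] with x hx
  simp only [smul_eq_mul]
  field_simp

/-- Positive-confidence risk rewrite (Ishida et al.).  With
marginal `μ`, posterior `η = r` positive `μ`-a.e., class prior `π₊ = E_μ[η]`,
and positive class-conditional `μ₊` (density `η/π₊` w.r.t. `μ`), the
classification risk `R(g) = E_{p(x,y)}[ℓ(y g(x))]` satisfies
`R(g) = π₊ E_{x∼μ₊}[ℓ(g(x)) + ((1-r(x))/r(x)) ℓ(-g(x))]`. -/
theorem pconf_risk_rewrite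
    (d : ℕ) (μ : Measure (Fin d → ℝ)) [IsProbabilityMeasure μ]
    (η : (Fin d → ℝ) → ℝ) (hη : Measurable η)
    (hη01 : ∀ x, η x ∈ Set.Icc (0 : ℝ) 1)
    (hpos : ∀ᵐ x ∂μ, 0 < η x)
    (π : ℝ) (hπ : π = ∫ x, η x ∂μ) (hπpos : 0 < π)
    (μp : Measure (Fin d → ℝ))
    (hμp : μp = (ENNReal.ofReal π)⁻¹ •
      μ.withDensity (fun x => ENNReal.ofReal (η x)))
    (ℓ : ℝ → ℝ) (hℓ : Measurable ℓ) (hℓ0 : ∀ z, 0 ≤ ℓ z)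
    (g : (Fin d → ℝ) → ℝ) (hg : Measurable g)
    (hint : Integrable (fun x => η x * ℓ (g x) + (1 - η x) * ℓ (-(g x))) μ) :
    ∫ x, (η x * ℓ (g x) + (1 - η x) * ℓ (-(g x))) ∂μ
      = π * ∫ x, (ℓ (g x) + ((1 - η x) / η x) * ℓ (-(g x))) ∂μp :=
  pconf_risk_rewrite_general d μ η hη hpos π hπpos μp hμp ℓ g
end
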